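/- arXiv:2511.04363 — 3 statements merged into one kernel-verified Lean document; each statement's English description precedes it below -/
import Mathlib

section
/- For every a>0, ℓ>0 and θ₀∈ℝ, the curve t ↦ (r(t), v(t)) := (R(θ₀+at, a, ℓ), V(θ₀+at, a, ℓ)), defined for t∈ℝ, is continuously differentiable, satisfies r(t)>0, and solves the Kepler characteristic system: r'(t) = v(t) and v'(t) = ℓ/r(t)³ − m/(2r(t)²) for all t∈ℝ. Moreover the energy identity v(t)² − m/r(t) + ℓ/r(t)² = a² holds for all t∈ℝ. -/
noncomputable section

open Real MeasureTheory Set Filter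

/-- Japanese bracket `⟨x⟩ := √(2+x²)`. -/
def jb (x : ℝ) : ℝ := Real.sqrt (2 + x ^ 2)

/-- `κ(a,ℓ) := (1 + 4a²ℓ/m²)^{-1/2}`. -/
def kpa (m a ℓ : ℝ) : ℝ := 1 / Real.sqrt (1 + 4 * a ^ 2 * ℓ / m ^ 2)

/-- `p(a,ℓ) := m / (2a²κ(a,ℓ))`. -/
def pfn (m a ℓ : ℝ) : ℝ := m / (2 * a ^ 2 * kpa m a ℓ)

/-- `r₀(a,ℓ) := p(a,ℓ)(1-κ(a,ℓ))`. -/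
def rZero (m a ℓ : ℝ) : ℝ := pfn m a ℓ * (1 - kpa m a ℓ)

/-- `G_κ(y) := √(y²-1) - κ ln(y + √(y²-1))`. -/
def Gf (κ y : ℝ) : ℝ := Real.sqrt (y ^ 2 - 1) - κ * Real.log (y + Real.sqrt (y ^ 2 - 1))

/-- `H_κ : [0,∞) → [1,∞)`, the inverse of `G_κ` on `[1,∞)`. -/
def Hf (κ x : ℝ) : ℝ := Function.invFunOn (Gf κ) (Set.Ici 1) x

/-- Inverse hyperbolic cosine `arcosh x = ln (x + √(x²-1))`. -/
def acosh (x : ℝ) : ℝ := Real.log (x + Real.sqrt (x ^ 2 - 1))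

/-- The radial function `R(θ,a,ℓ)`. -/
def Rf (m θ a ℓ : ℝ) : ℝ :=
  pfn m a ℓ * Hf (kpa m a ℓ) (|θ| / pfn m a ℓ) - pfn m a ℓ * kpa m a ℓ

/-- The radial velocity `V(θ,a,ℓ)`. -/
def Vf (m θ a ℓ : ℝ) : ℝ :=
  Real.sign θ * a *
    Real.sqrt (1 + m / (a ^ 2 * Rf m θ a ℓ) - ℓ / (a ^ 2 * (Rf m θ a ℓ) ^ 2))

/-- The dynamical radial function `R̃(t,θ,a,ℓ) = R(θ+at,a,ℓ)`. -/
def Rtil (m t θ a ℓ : ℝ) : ℝ := Rf m (θ + a * t) a ℓ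

/-- The action `𝒜(r,v,ℓ) = √(v² - m/r + ℓ/r²)`. -/
def Acal (m r v ℓ : ℝ) : ℝ := Real.sqrt (v ^ 2 - m / r + ℓ / r ^ 2)

/-- The angle `Θ(r,v,ℓ) = sgn(v)·p(𝒜,ℓ)·G_{κ(𝒜,ℓ)}(r/p(𝒜,ℓ) + κ(𝒜,ℓ))`. -/
def Theta (m r v ℓ : ℝ) : ℝ :=
  Real.sign v * pfn m (Acal m r v ℓ) ℓ *
    Gf (kpa m (Acal m r v ℓ) ℓ) (r / pfn m (Acal m r v ℓ) ℓ + kpa m (Acal m r v ℓ) ℓ)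

/-- The phase space `ℝ×(0,∞)×(0,∞)` in the variables `(θ,a,ℓ)`. -/
def phaseSet : Set (ℝ × ℝ × ℝ) := Set.univ ×ˢ Set.Ioi 0 ×ˢ Set.Ioi 0

/-- The gravitational field
`F(t,r) = -(1/r²)·∫∫∫ 1_{R(θ+ta,a,ℓ) ≤ r} γ(θ,a,ℓ)² dθ da dℓ`. -/
def gravF (m : ℝ) (γ : ℝ × ℝ × ℝ → ℝ) (t r : ℝ) : ℝ :=
  -(1 / r ^ 2) *
    (∫⁻ x in {x : ℝ × ℝ × ℝ | Rf m (x.1 + t * x.2.1) x.2.1 x.2.2 ≤ r},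
        ENNReal.ofReal ((γ x) ^ 2) ∂(volume.restrict phaseSet)).toReal

/-- The effective gravitational field
`F_eff(t,r) = -(1/r²)·∫∫∫ 1_{at ≤ r} γ(θ,a,ℓ)² dθ da dℓ`. -/
def gravFeff (γ : ℝ × ℝ × ℝ → ℝ) (t r : ℝ) : ℝ :=
  -(1 / r ^ 2) *
    (∫⁻ x in {x : ℝ × ℝ × ℝ | x.2.1 * t ≤ r},
        ENNReal.ofReal ((γ x) ^ 2) ∂(volume.restrict phaseSet)).toReal

/-!
Substituting `y = cosh u` turns `G_κ` into the hyperbolic Kepler function `u ↦ sinh u - κ u` on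
`u ≥ 0`. For `κ < 1` this function is an odd increasing bijection of `ℝ`; writing `u(θ)` for its
inverse at `θ / p`, the orbit becomes `R = p (cosh u - κ)` and `V = a sinh u / (cosh u - κ)`, which
is smooth in `θ` even at the pericentre `θ = 0`, where `|θ|` and `sgn θ` are not. Along
`θ = θ₀ + a t` one has `du/dt = a / (p (cosh u - κ))`, and with `m = 2 a² κ p`,
`ℓ = a² p² (1 - κ²)` both the characteristic system and the energy identity reduce to
`cosh² u - sinh² u = 1`.
-/

lemma sign_mul_abs_self (x : ℝ) : Real.sign x * |x| = x := by
  rcases lt_trichotomy x 0 with hx | rfl | hx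
  · rw [sign_of_neg hx, abs_of_neg hx]
    ring
  · simp
  · rw [sign_of_pos hx, abs_of_pos hx, one_mul]

lemma sign_apply_of_strictMono {f : ℝ → ℝ} (hf : StrictMono f) (h0 : f 0 = 0) (x : ℝ) :
    Real.sign (f x) = Real.sign x := by
  rcases lt_trichotomy x 0 with hx | rfl | hx
  · rw [sign_of_neg hx, sign_of_neg (h0 ▸ hf hx)]
  · rw [h0]
  · rw [sign_of_pos hx, sign_of_pos (h0 ▸ hf hx)]

lemma contDiff_one_of_hasDerivAt {𝕜 F : Type*} [NontriviallyNormedField 𝕜] [NormedAddCommGroup F]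
    [NormedSpace 𝕜 F] {f f' : 𝕜 → F} (hf : ∀ x, HasDerivAt f (f' x) x) (hf' : Continuous f') :
    ContDiff 𝕜 1 f := by
  rw [contDiff_one_iff_deriv, funext fun x => (hf x).deriv]
  exact ⟨fun x => (hf x).differentiableAt, hf'⟩

def hypKepler (κ u : ℝ) : ℝ := sinh u - κ * u

section HypKepler

variable {κ : ℝ}

lemma hypKepler_neg (κ u : ℝ) : hypKepler κ (-u) = -hypKepler κ u := by
  simp only [hypKepler, sinh_neg]
  ring

lemma hypKepler_zero (κ : ℝ) : hypKepler κ 0 = 0 := by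
  simp [hypKepler]

lemma hasDerivAt_hypKepler (κ u : ℝ) : HasDerivAt (hypKepler κ) (cosh u - κ) u := by
  have h := (hasDerivAt_sinh u).sub ((hasDerivAt_id' u).const_mul κ)
  rwa [mul_one] at h

lemma strictMono_hypKepler (hκ : κ < 1) : StrictMono (hypKepler κ) :=
  strictMono_of_hasDerivAt_pos (hasDerivAt_hypKepler κ) fun u => by linarith [one_le_cosh u]

lemma mul_le_hypKepler {u : ℝ} (hu : 0 ≤ u) : (1 - κ) * u ≤ hypKepler κ u := by
  have := self_le_sinh_iff.2 hu
  simp only [hypKepler]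
  linarith

lemma surjective_hypKepler (hκ : κ < 1) : Function.Surjective (hypKepler κ) := by
  have h_top : Tendsto (hypKepler κ) atTop atTop :=
    tendsto_atTop_mono' atTop (eventually_ge_atTop 0 |>.mono fun u hu => mul_le_hypKepler hu)
      (tendsto_id.const_mul_atTop (by linarith))
  have h_cont : Continuous (hypKepler κ) := by unfold hypKepler; fun_prop
  refine h_cont.surjective h_top ?_
  have h_neg : hypKepler κ = fun u => -hypKepler κ (-u) := by
    ext u
    rw [hypKepler_neg, neg_neg]
  rw [h_neg]
  exact tendsto_neg_atTop_atBot.comp (h_top.comp tendsto_neg_atBot_atTop)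

lemma hypKepler_abs (hκ : κ < 1) (u : ℝ) : hypKepler κ |u| = |hypKepler κ u| := by
  have h0 := hypKepler_zero κ
  rcases le_total 0 u with hu | hu
  · rw [abs_of_nonneg hu, abs_of_nonneg (h0 ▸ (strictMono_hypKepler hκ).monotone hu)]
  · rw [abs_of_nonpos hu, abs_of_nonpos (h0 ▸ (strictMono_hypKepler hκ).monotone hu),
      hypKepler_neg]

def hypKeplerIso (hκ : κ < 1) : ℝ ≃o ℝ :=
  StrictMono.orderIsoOfSurjective _ (strictMono_hypKepler hκ) (surjective_hypKepler hκ)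

lemma hypKepler_hypKeplerIso_symm (hκ : κ < 1) (x : ℝ) :
    hypKepler κ ((hypKeplerIso hκ).symm x) = x :=
  (hypKeplerIso hκ).apply_symm_apply x

lemma hypKeplerIso_symm_zero (hκ : κ < 1) : (hypKeplerIso hκ).symm 0 = 0 :=
  (hypKeplerIso hκ).symm_apply_eq.2 (hypKepler_zero κ).symm

lemma hasDerivAt_hypKeplerIso_symm (hκ : κ < 1) (x : ℝ) :
    HasDerivAt (hypKeplerIso hκ).symm (cosh ((hypKeplerIso hκ).symm x) - κ)⁻¹ x :=
  (hasDerivAt_hypKepler κ _).of_local_left_inverse (hypKeplerIso hκ).symm.continuous.continuousAt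
    (by linarith [one_le_cosh ((hypKeplerIso hκ).symm x)])
    (.of_forall (hypKepler_hypKeplerIso_symm hκ))

lemma Gf_eq_hypKepler_arcosh (κ : ℝ) {y : ℝ} (hy : 1 ≤ y) : Gf κ y = hypKepler κ (arcosh y) := by
  rw [hypKepler, sinh_arcosh hy]
  rfl

lemma Gf_cosh (κ u : ℝ) : Gf κ (cosh u) = hypKepler κ |u| := by
  rw [← cosh_abs, Gf_eq_hypKepler_arcosh κ (one_le_cosh _), arcosh_cosh (abs_nonneg u)]

lemma injOn_Gf (hκ : κ < 1) : InjOn (Gf κ) (Ici 1) := by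
  intro y hy z hz h
  rw [Gf_eq_hypKepler_arcosh κ hy, Gf_eq_hypKepler_arcosh κ hz] at h
  rw [← cosh_arcosh hy, ← cosh_arcosh hz, (strictMono_hypKepler hκ).injective h]

lemma Hf_abs (hκ : κ < 1) (x : ℝ) : Hf κ |x| = cosh ((hypKeplerIso hκ).symm x) := by
  set u := (hypKeplerIso hκ).symm x
  have hG : Gf κ (cosh u) = |x| := by
    rw [Gf_cosh, hypKepler_abs hκ, hypKepler_hypKeplerIso_symm]
  rw [← hG]
  exact (injOn_Gf hκ).leftInvOn_invFunOn (one_le_cosh u)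

lemma hasDerivAt_hypKeplerIso_symm_line (hκ : κ < 1) (p θ₀ a t : ℝ) :
    HasDerivAt (fun s => (hypKeplerIso hκ).symm ((θ₀ + a * s) / p))
      (a / (p * (cosh ((hypKeplerIso hκ).symm ((θ₀ + a * t) / p)) - κ))) t := by
  have h_line : HasDerivAt (fun s => (θ₀ + a * s) / p) (a / p) t := by
    simpa using (((hasDerivAt_id t).const_mul a).const_add θ₀).div_const p
  refine ((hasDerivAt_hypKeplerIso_symm hκ _).comp t h_line).congr_deriv ?_
  simp only [div_eq_mul_inv, mul_inv]
  ring

end HypKepler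

section KeplerOrbit

variable {m ℓ a κ p : ℝ}

lemma kepler_radicand (hm : m = 2 * a ^ 2 * κ * p) (hℓ : ℓ = a ^ 2 * p ^ 2 * (1 - κ ^ 2))
    (ha : a ≠ 0) (hp : p ≠ 0) (hκ : κ < 1) (u : ℝ) :
    1 + m / (a ^ 2 * (p * (cosh u - κ))) - ℓ / (a ^ 2 * (p * (cosh u - κ)) ^ 2)
      = (sinh u / (cosh u - κ)) ^ 2 := by
  have hc : cosh u - κ ≠ 0 := by linarith [one_le_cosh u]
  subst hm hℓ
  field_simp
  linear_combination cosh_sq u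

lemma kepler_energy (hm : m = 2 * a ^ 2 * κ * p) (hℓ : ℓ = a ^ 2 * p ^ 2 * (1 - κ ^ 2))
    (hp : p ≠ 0) (hκ : κ < 1) (u : ℝ) :
    (a * sinh u / (cosh u - κ)) ^ 2 - m / (p * (cosh u - κ)) + ℓ / (p * (cosh u - κ)) ^ 2
      = a ^ 2 := by
  have hc : cosh u - κ ≠ 0 := by linarith [one_le_cosh u]
  subst hm hℓ
  field_simp
  linear_combination (-a ^ 2) * cosh_sq u

lemma kepler_force (hm : m = 2 * a ^ 2 * κ * p) (hℓ : ℓ = a ^ 2 * p ^ 2 * (1 - κ ^ 2))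
    (hp : p ≠ 0) (hκ : κ < 1) (u : ℝ) :
    a ^ 2 * (1 - κ * cosh u) / (p * (cosh u - κ) ^ 3)
      = ℓ / (p * (cosh u - κ)) ^ 3 - m / (2 * (p * (cosh u - κ)) ^ 2) := by
  have hc : cosh u - κ ≠ 0 := by linarith [one_le_cosh u]
  subst hm hℓ
  field_simp
  ring

end KeplerOrbit

section Parameters

variable {m a ℓ : ℝ}

lemma kpa_pos (hℓ : 0 ≤ ℓ) : 0 < kpa m a ℓ := by
  unfold kpa
  positivity

lemma kpa_lt_one (hm : m ≠ 0) (ha : a ≠ 0) (hℓ : 0 < ℓ) : kpa m a ℓ < 1 := by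
  unfold kpa
  rw [div_lt_one (by positivity), lt_sqrt zero_le_one]
  have : 0 < 4 * a ^ 2 * ℓ / m ^ 2 := by positivity
  linarith

lemma pfn_pos (hm : 0 < m) (ha : a ≠ 0) (hℓ : 0 ≤ ℓ) : 0 < pfn m a ℓ := by
  have := kpa_pos (m := m) (a := a) hℓ
  unfold pfn
  positivity

lemma m_eq_kpa_pfn (ha : a ≠ 0) (hℓ : 0 ≤ ℓ) : m = 2 * a ^ 2 * kpa m a ℓ * pfn m a ℓ := by
  have := (kpa_pos (m := m) (a := a) hℓ).ne'
  unfold pfn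
  field_simp

lemma ℓ_eq_kpa_pfn (hm : m ≠ 0) (ha : a ≠ 0) (hℓ : 0 ≤ ℓ) :
    ℓ = a ^ 2 * pfn m a ℓ ^ 2 * (1 - kpa m a ℓ ^ 2) := by
  have hκ := (kpa_pos (m := m) (a := a) hℓ).ne'
  have hκ_sq : kpa m a ℓ ^ 2 * (1 + 4 * a ^ 2 * ℓ / m ^ 2) = 1 := by
    unfold kpa
    rw [div_pow, one_pow, sq_sqrt (by positivity)]
    field_simp
  unfold pfn
  field_simp at hκ_sq ⊢
  linear_combination hκ_sq

end Parameters

section Orbit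

variable {m a ℓ : ℝ}

lemma Rf_eq_cosh (hm : 0 < m) (ha : 0 < a) (hℓ : 0 < ℓ) (θ : ℝ) :
    Rf m θ a ℓ = pfn m a ℓ *
      (cosh ((hypKeplerIso (kpa_lt_one hm.ne' ha.ne' hℓ)).symm (θ / pfn m a ℓ)) - kpa m a ℓ) := by
  rw [Rf, ← Hf_abs, abs_div, abs_of_pos (pfn_pos hm ha.ne' hℓ.le)]
  ring

lemma Vf_eq_sinh (hm : 0 < m) (ha : 0 < a) (hℓ : 0 < ℓ) (θ : ℝ) :
    Vf m θ a ℓ = a * sinh ((hypKeplerIso (kpa_lt_one hm.ne' ha.ne' hℓ)).symm (θ / pfn m a ℓ)) /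
      (cosh ((hypKeplerIso (kpa_lt_one hm.ne' ha.ne' hℓ)).symm (θ / pfn m a ℓ)) - kpa m a ℓ) := by
  have hκ := kpa_lt_one hm.ne' ha.ne' hℓ
  have hp := pfn_pos hm ha.ne' hℓ.le
  set e := hypKeplerIso hκ
  have hc : 0 < cosh (e.symm (θ / pfn m a ℓ)) - kpa m a ℓ := by
    linarith [one_le_cosh (e.symm (θ / pfn m a ℓ))]
  have h_sign : Real.sign (sinh (e.symm (θ / pfn m a ℓ))) = Real.sign θ :=
    sign_apply_of_strictMono (sinh_strictMono.comp (e.symm.strictMono.comp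
      fun _ _ h => div_lt_div_of_pos_right h hp)) (by simp [e, hypKeplerIso_symm_zero]) θ
  rw [Vf, Rf_eq_cosh hm ha hℓ,
    kepler_radicand (m_eq_kpa_pfn ha.ne' hℓ.le) (ℓ_eq_kpa_pfn hm.ne' ha.ne' hℓ.le) ha.ne' hp.ne' hκ,
    sqrt_sq_eq_abs, abs_div, abs_of_pos hc, ← h_sign, mul_right_comm, ← mul_div_assoc,
    sign_mul_abs_self]
  ring

lemma hasDerivAt_Rf_line (hm : 0 < m) (ha : 0 < a) (hℓ : 0 < ℓ) (θ₀ t : ℝ) :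
    HasDerivAt (fun s => Rf m (θ₀ + a * s) a ℓ) (Vf m (θ₀ + a * t) a ℓ) t := by
  have hκ := kpa_lt_one hm.ne' ha.ne' hℓ
  have hp := pfn_pos hm ha.ne' hℓ.le
  have hU := hasDerivAt_hypKeplerIso_symm_line hκ (pfn m a ℓ) θ₀ a t
  have hc : cosh ((hypKeplerIso hκ).symm ((θ₀ + a * t) / pfn m a ℓ)) - kpa m a ℓ ≠ 0 := by
    linarith [one_le_cosh ((hypKeplerIso hκ).symm ((θ₀ + a * t) / pfn m a ℓ))]
  simp only [Rf_eq_cosh hm ha hℓ, Vf_eq_sinh hm ha hℓ]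
  refine ((hU.cosh.sub_const (kpa m a ℓ)).const_mul (pfn m a ℓ)).congr_deriv ?_
  field_simp

lemma hasDerivAt_Vf_line (hm : 0 < m) (ha : 0 < a) (hℓ : 0 < ℓ) (θ₀ t : ℝ) :
    HasDerivAt (fun s => Vf m (θ₀ + a * s) a ℓ)
      (ℓ / Rf m (θ₀ + a * t) a ℓ ^ 3 - m / (2 * Rf m (θ₀ + a * t) a ℓ ^ 2)) t := by
  have hκ := kpa_lt_one hm.ne' ha.ne' hℓ
  have hp := pfn_pos hm ha.ne' hℓ.le
  have hU := hasDerivAt_hypKeplerIso_symm_line hκ (pfn m a ℓ) θ₀ a t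
  have hc : cosh ((hypKeplerIso hκ).symm ((θ₀ + a * t) / pfn m a ℓ)) - kpa m a ℓ ≠ 0 := by
    linarith [one_le_cosh ((hypKeplerIso hκ).symm ((θ₀ + a * t) / pfn m a ℓ))]
  simp only [Rf_eq_cosh hm ha hℓ, Vf_eq_sinh hm ha hℓ]
  rw [← kepler_force (m_eq_kpa_pfn ha.ne' hℓ.le) (ℓ_eq_kpa_pfn hm.ne' ha.ne' hℓ.le) hp.ne' hκ]
  refine ((hU.sinh.const_mul a).div (hU.cosh.sub_const (kpa m a ℓ)) hc).congr_deriv ?_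
  field_simp
  linear_combination cosh_sq ((hypKeplerIso hκ).symm ((θ₀ + a * t) / pfn m a ℓ))

lemma Rf_pos (hm : 0 < m) (ha : 0 < a) (hℓ : 0 < ℓ) (θ : ℝ) : 0 < Rf m θ a ℓ := by
  have hκ := kpa_lt_one hm.ne' ha.ne' hℓ
  have hc := one_le_cosh ((hypKeplerIso hκ).symm (θ / pfn m a ℓ))
  rw [Rf_eq_cosh hm ha hℓ]
  exact mul_pos (pfn_pos hm ha.ne' hℓ.le) (by linarith)

lemma Vf_sq_sub_add (hm : 0 < m) (ha : 0 < a) (hℓ : 0 < ℓ) (θ : ℝ) :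
    Vf m θ a ℓ ^ 2 - m / Rf m θ a ℓ + ℓ / Rf m θ a ℓ ^ 2 = a ^ 2 := by
  rw [Vf_eq_sinh hm ha hℓ, Rf_eq_cosh hm ha hℓ]
  exact kepler_energy (m_eq_kpa_pfn ha.ne' hℓ.le) (ℓ_eq_kpa_pfn hm.ne' ha.ne' hℓ.le)
    (pfn_pos hm ha.ne' hℓ.le).ne' (kpa_lt_one hm.ne' ha.ne' hℓ) _

end Orbit

/-- the linearized (Kepler) characteristics.  For every `a>0`, `ℓ>0`, `θ₀∈ℝ`, the
curve `t ↦ (R(θ₀+at,a,ℓ), V(θ₀+at,a,ℓ))` is C¹, stays in `r > 0`, solves the Kepler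
characteristic system, and satisfies the energy identity. -/
theorem statement0 (m : ℝ) (hm : 0 < m) (a ℓ θ₀ : ℝ) (ha : 0 < a) (hℓ : 0 < ℓ) :
    (ContDiff ℝ 1 fun t : ℝ => Rf m (θ₀ + a * t) a ℓ) ∧
    (ContDiff ℝ 1 fun t : ℝ => Vf m (θ₀ + a * t) a ℓ) ∧
    ∀ t : ℝ,
      0 < Rf m (θ₀ + a * t) a ℓ ∧
      HasDerivAt (fun s : ℝ => Rf m (θ₀ + a * s) a ℓ) (Vf m (θ₀ + a * t) a ℓ) t ∧
      HasDerivAt (fun s : ℝ => Vf m (θ₀ + a * s) a ℓ)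
        (ℓ / (Rf m (θ₀ + a * t) a ℓ) ^ 3 - m / (2 * (Rf m (θ₀ + a * t) a ℓ) ^ 2)) t ∧
      (Vf m (θ₀ + a * t) a ℓ) ^ 2 - m / Rf m (θ₀ + a * t) a ℓ
          + ℓ / (Rf m (θ₀ + a * t) a ℓ) ^ 2 = a ^ 2 := by
  have hR := hasDerivAt_Rf_line hm ha hℓ θ₀
  have hV := hasDerivAt_Vf_line hm ha hℓ θ₀
  have hR_ne (t : ℝ) : Rf m (θ₀ + a * t) a ℓ ≠ 0 := (Rf_pos hm ha hℓ _).ne'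
  have hR_cont : Continuous fun t => Rf m (θ₀ + a * t) a ℓ :=
    continuous_iff_continuousAt.2 fun t => (hR t).continuousAt
  have hV_cont : Continuous fun t => Vf m (θ₀ + a * t) a ℓ :=
    continuous_iff_continuousAt.2 fun t => (hV t).continuousAt
  have h_force_cont : Continuous fun t =>
      ℓ / Rf m (θ₀ + a * t) a ℓ ^ 3 - m / (2 * Rf m (θ₀ + a * t) a ℓ ^ 2) :=
    (continuous_const.div (hR_cont.pow 3) fun t => pow_ne_zero 3 (hR_ne t)).sub
      (continuous_const.div (continuous_const.mul (hR_cont.pow 2))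
        fun t => mul_ne_zero two_ne_zero (pow_ne_zero 2 (hR_ne t)))
  exact ⟨contDiff_one_of_hasDerivAt hR hV_cont, contDiff_one_of_hasDerivAt hV h_force_cont,
    fun t => ⟨Rf_pos hm ha hℓ _, hR t, hV t, Vf_sq_sub_add hm ha hℓ _⟩⟩
end
end

section
/- Let C₀ ≥ 1. Then there exists a constant C₁ = C₁(C₀) ≥ 1 such that for all x₁, x₂ > 0 and all κ₁, κ₂ ∈ (0,1) satisfying x₁/x₂ ∈ [1/C₀, C₀], κ₁/κ₂ ∈ [1/C₀, C₀] and (1−κ₁)/(1−κ₂) ∈ [1/C₀, C₀], one has 1/C₁ ≤ (H_{κ₁}(x₁) − 1)/(H_{κ₂}(x₂) − 1) ≤ C₁. -/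
noncomputable section

open Real MeasureTheory Set Filter

/-!
Substituting `y = 1 + 2u²` gives `G_κ(1 + 2u²) = 2 g_κ(u)` with
`g_κ(u) := halfG κ u = u √(1 + u²) - κ arsinh u = (1 - κ) g₀(u) + κ g₁(u)`,
so `H_κ(x) - 1 = 2u²` where `2 g_κ(u) = x`. Under `u ↦ D u` with `D ≥ 1`, `g₀` grows at least by the factor `D`, and `g₁`,
which is comparable to `u³ / √(1 + u²)` because `tanh s ≤ s ≤ sinh s`, at least by `D² / 2`.
Hence `C g_{κ₂}(u) ≤ g_{κ₁}(2C² u)` whenever `1 - κ₂ ≤ C (1 - κ₁)`; since `g_{κ₁}` is increasing,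
`x₁ ≤ C x₂` then forces `u₁ ≤ 2C² u₂`, i.e. `H_{κ₁}(x₁) - 1 ≤ 4C⁴ (H_{κ₂}(x₂) - 1)`.
Exchanging the indices gives the reverse bound.
-/

def halfG (κ u : ℝ) : ℝ := u * √(1 + u ^ 2) - κ * arsinh u

@[simp]
lemma halfG_apply_zero (κ : ℝ) : halfG κ 0 = 0 := by
  simp [halfG]

lemma halfG_eq_add (κ u : ℝ) : halfG κ u = (1 - κ) * halfG 0 u + κ * halfG 1 u := by
  unfold halfG
  ring

lemma Gf_one_add_two_mul_sq (κ : ℝ) {u : ℝ} (hu : 0 ≤ u) :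
    Gf κ (1 + 2 * u ^ 2) = 2 * halfG κ u := by
  have hS : √(1 + u ^ 2) ^ 2 = 1 + u ^ 2 := sq_sqrt (by positivity)
  have hrad : (1 + 2 * u ^ 2) ^ 2 - 1 = (2 * u * √(1 + u ^ 2)) ^ 2 := by
    rw [mul_pow, hS]
    ring
  have hsum : 1 + 2 * u ^ 2 + 2 * u * √(1 + u ^ 2) = (u + √(1 + u ^ 2)) ^ 2 := by
    rw [add_sq, hS]
    ring
  unfold Gf halfG
  rw [hrad, sqrt_sq (by positivity), hsum, log_pow, arsinh]
  push_cast
  ring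

lemma Real.sinh_le_mul_cosh {s : ℝ} (hs : 0 ≤ s) : sinh s ≤ s * cosh s := by
  rcases hs.eq_or_lt with rfl | hs
  · simp
  obtain ⟨c, hc, hslope⟩ := exists_hasDerivAt_eq_slope sinh cosh hs
    continuous_sinh.continuousOn fun x _ => hasDerivAt_sinh x
  rw [sinh_zero, sub_zero, sub_zero, eq_div_iff hs.ne'] at hslope
  rw [← hslope, mul_comm]
  gcongr
  exact cosh_le_cosh.2 (by rw [abs_of_pos hc.1, abs_of_pos hs]; exact hc.2.le)

lemma Real.le_arsinh_mul_sqrt {u : ℝ} (hu : 0 ≤ u) : u ≤ arsinh u * √(1 + u ^ 2) := by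
  simpa only [sinh_arsinh, cosh_arsinh] using sinh_le_mul_cosh (arsinh_nonneg_iff.2 hu)

lemma Real.arsinh_le_self {u : ℝ} (hu : 0 ≤ u) : arsinh u ≤ u := by
  simpa only [sinh_arsinh] using self_le_sinh_iff.2 (arsinh_nonneg_iff.2 hu)

lemma halfG_zero_nonneg {u : ℝ} (hu : 0 ≤ u) : 0 ≤ halfG 0 u := by
  unfold halfG
  simp only [zero_mul, sub_zero]
  positivity

lemma halfG_one_le_halfG_zero {u : ℝ} (hu : 0 ≤ u) : halfG 1 u ≤ halfG 0 u := by
  unfold halfG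
  linarith [arsinh_nonneg_iff.2 hu]

lemma halfG_one_nonneg {u : ℝ} (hu : 0 ≤ u) : 0 ≤ halfG 1 u := by
  have : u ≤ u * √(1 + u ^ 2) := le_mul_of_one_le_right hu (one_le_sqrt.2 (by nlinarith))
  unfold halfG
  linarith [arsinh_le_self hu]

lemma halfG_one_mul_sqrt_le {u : ℝ} (hu : 0 ≤ u) : halfG 1 u * √(1 + u ^ 2) ≤ u ^ 3 := by
  have hS : √(1 + u ^ 2) ^ 2 = 1 + u ^ 2 := sq_sqrt (by positivity)
  unfold halfG
  nlinarith [le_arsinh_mul_sqrt hu]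

lemma pow_three_le_two_mul_halfG_one_mul_sqrt {u : ℝ} (hu : 0 ≤ u) :
    u ^ 3 ≤ 2 * halfG 1 u * √(1 + u ^ 2) := by
  have hS : √(1 + u ^ 2) ^ 2 = 1 + u ^ 2 := sq_sqrt (by positivity)
  have hS0 : 0 ≤ √(1 + u ^ 2) := sqrt_nonneg _
  unfold halfG
  nlinarith [mul_le_mul_of_nonneg_right (arsinh_le_self hu) hS0,
    mul_nonneg hu (sq_nonneg (√(1 + u ^ 2) - 1))]

lemma sqrt_one_add_mul_sq_le {D : ℝ} (hD : 1 ≤ D) (u : ℝ) :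
    √(1 + (D * u) ^ 2) ≤ D * √(1 + u ^ 2) := by
  rw [show D * √(1 + u ^ 2) = √(D ^ 2 * (1 + u ^ 2)) by
    rw [sqrt_mul (sq_nonneg D), sqrt_sq (by linarith)]]
  gcongr
  nlinarith [sq_nonneg u]

lemma mul_halfG_zero_le {D u : ℝ} (hD : 1 ≤ D) (hu : 0 ≤ u) :
    D * halfG 0 u ≤ halfG 0 (D * u) := by
  unfold halfG
  simp only [zero_mul, sub_zero]
  rw [mul_assoc]
  gcongr
  nlinarith

lemma sq_mul_halfG_one_le {D u : ℝ} (hD : 1 ≤ D) (hu : 0 ≤ u) :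
    D ^ 2 * halfG 1 u ≤ 2 * halfG 1 (D * u) := by
  have hSpos : 0 < √(1 + (D * u) ^ 2) := sqrt_pos.2 (by positivity)
  refine le_of_mul_le_mul_right ?_ hSpos
  calc D ^ 2 * halfG 1 u * √(1 + (D * u) ^ 2)
      ≤ D ^ 2 * halfG 1 u * (D * √(1 + u ^ 2)) := by
        gcongr
        · exact mul_nonneg (sq_nonneg D) (halfG_one_nonneg hu)
        · exact sqrt_one_add_mul_sq_le hD u
    _ = D ^ 3 * (halfG 1 u * √(1 + u ^ 2)) := by ring
    _ ≤ D ^ 3 * u ^ 3 := by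
        gcongr
        exact halfG_one_mul_sqrt_le hu
    _ = (D * u) ^ 3 := by ring
    _ ≤ 2 * halfG 1 (D * u) * √(1 + (D * u) ^ 2) :=
        pow_three_le_two_mul_halfG_one_mul_sqrt (by positivity)

lemma mul_halfG_le_halfG_mul {C κ₁ κ₂ u : ℝ} (hC : 1 ≤ C) (hκ₁0 : 0 ≤ κ₁) (hκ₁1 : κ₁ ≤ 1)
    (hκ₂ : κ₂ ≤ 1) (hκ : 1 - κ₂ ≤ C * (1 - κ₁)) (hu : 0 ≤ u) :
    C * halfG κ₂ u ≤ halfG κ₁ (2 * C ^ 2 * u) := by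
  set v := 2 * C ^ 2 * u
  have hv : 0 ≤ v := by positivity
  have hP : 2 * C ^ 2 * halfG 0 u ≤ halfG 0 v := mul_halfG_zero_le (by nlinarith) hu
  have hh : 2 * C * halfG 1 u ≤ halfG 1 v := by
    have h := sq_mul_halfG_one_le (by nlinarith : 1 ≤ 2 * C ^ 2) hu
    nlinarith [mul_le_mul_of_nonneg_right (le_self_pow₀ hC (by norm_num : 4 ≠ 0))
      (halfG_one_nonneg hu)]
  have hP0 := halfG_zero_nonneg hu
  have hh0 := halfG_one_nonneg hu
  have hhP := halfG_one_le_halfG_zero hv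
  have hhv0 := halfG_one_nonneg hv
  calc C * halfG κ₂ u
      = C * ((1 - κ₂) * halfG 0 u + κ₂ * halfG 1 u) := by rw [halfG_eq_add]
    _ ≤ C * (C * (1 - κ₁) * halfG 0 u + halfG 1 u) := by gcongr; nlinarith
    _ = (1 - κ₁) * (C ^ 2 * halfG 0 u) + C * halfG 1 u := by ring
    _ ≤ (1 - κ₁) * (halfG 0 v / 2) + halfG 1 v / 2 := by gcongr <;> linarith
    _ ≤ (1 - κ₁) * halfG 0 v + κ₁ * halfG 1 v := by nlinarith [mul_nonneg hκ₁0 hhv0]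
    _ = halfG κ₁ v := (halfG_eq_add κ₁ v).symm

lemma hasDerivAt_halfG (κ u : ℝ) :
    HasDerivAt (halfG κ) ((1 + 2 * u ^ 2 - κ) / √(1 + u ^ 2)) u := by
  have hS : 0 < √(1 + u ^ 2) := sqrt_pos.2 (by positivity)
  have hsqrt : HasDerivAt (fun u => √(1 + u ^ 2)) (u / √(1 + u ^ 2)) u := by
    convert ((hasDerivAt_pow 2 u).const_add 1).sqrt (by positivity) using 1
    norm_num
    rw [mul_div_mul_left _ _ two_ne_zero]
  refine HasDerivAt.congr_deriv (f := fun u => u * √(1 + u ^ 2) - κ * arsinh u)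
    (((hasDerivAt_id' u).mul hsqrt).sub ((hasDerivAt_arsinh u).const_mul κ)) ?_
  field_simp
  rw [sq_sqrt (by positivity)]
  ring

lemma continuous_halfG (κ : ℝ) : Continuous (halfG κ) :=
  continuous_iff_continuousAt.2 fun u => (hasDerivAt_halfG κ u).continuousAt

lemma halfG_strictMono {κ : ℝ} (hκ : κ < 1) : StrictMono (halfG κ) :=
  strictMono_of_deriv_pos fun u => by
    rw [(hasDerivAt_halfG κ u).deriv]
    exact div_pos (by nlinarith [sq_nonneg u]) (sqrt_pos.2 (by positivity))

lemma exists_two_mul_halfG_eq {κ x : ℝ} (hκ0 : 0 ≤ κ) (hκ1 : κ < 1) (hx : 0 ≤ x) :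
    ∃ u, 0 ≤ u ∧ 2 * halfG κ u = x := by
  set U := x / (2 * (1 - κ))
  have hβ : 0 < 1 - κ := by linarith
  have hU : 0 ≤ U := by positivity
  -- `halfG κ u ≥ (1 - κ) * u` for `u ≥ 0`, whence the choice of `U`
  have hxU : x ≤ 2 * halfG κ U := by
    have hPU : U ≤ halfG 0 U := by
      unfold halfG
      simp only [zero_mul, sub_zero]
      exact le_mul_of_one_le_right hU (one_le_sqrt.2 (by nlinarith))
    have : x = 2 * ((1 - κ) * U) := by
      simp only [U]
      field_simp
    rw [this, halfG_eq_add]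
    nlinarith [halfG_one_nonneg hU]
  have hcont : ContinuousOn (fun u => 2 * halfG κ u) (Icc 0 U) :=
    (continuous_const.mul (continuous_halfG κ)).continuousOn
  obtain ⟨u, hu, hux⟩ := intermediate_value_Icc hU hcont ⟨by simpa using hx, hxU⟩
  exact ⟨u, hu.1, hux⟩

lemma exists_Hf_eq {κ x : ℝ} (hκ0 : 0 ≤ κ) (hκ1 : κ < 1) (hx : 0 ≤ x) :
    ∃ u, 0 ≤ u ∧ 2 * halfG κ u = x ∧ Hf κ x = 1 + 2 * u ^ 2 := by
  obtain ⟨u₀, hu₀, hu₀x⟩ := exists_two_mul_halfG_eq hκ0 hκ1 hx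
  obtain ⟨hHmem, hGH⟩ := Function.invFunOn_pos (f := Gf κ) (s := Ici 1)
    ⟨1 + 2 * u₀ ^ 2, le_add_of_nonneg_right (by positivity : (0 : ℝ) ≤ 2 * u₀ ^ 2),
      by rw [Gf_one_add_two_mul_sq κ hu₀, hu₀x]⟩
  have hH1 : 1 ≤ Hf κ x := hHmem
  set u := √((Hf κ x - 1) / 2)
  have hHu : Hf κ x = 1 + 2 * u ^ 2 := by
    rw [sq_sqrt (by linarith)]
    ring
  refine ⟨u, sqrt_nonneg _, ?_, hHu⟩
  rw [← Gf_one_add_two_mul_sq κ (sqrt_nonneg _), ← hHu]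
  exact hGH

lemma one_lt_Hf {κ x : ℝ} (hκ0 : 0 ≤ κ) (hκ1 : κ < 1) (hx : 0 < x) : 1 < Hf κ x := by
  obtain ⟨u, -, hux, hHu⟩ := exists_Hf_eq hκ0 hκ1 hx.le
  have hu : 0 < u := (halfG_strictMono hκ1).lt_iff_lt.1 (by simp only [halfG_apply_zero]; linarith)
  rw [hHu]
  nlinarith

lemma Hf_sub_one_le {C κ₁ κ₂ x₁ x₂ : ℝ} (hC : 1 ≤ C) (hκ₁0 : 0 ≤ κ₁) (hκ₁1 : κ₁ < 1)
    (hκ₂0 : 0 ≤ κ₂) (hκ₂1 : κ₂ < 1) (hx₁ : 0 ≤ x₁) (hx₂ : 0 ≤ x₂) (hx : x₁ ≤ C * x₂)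
    (hκ : 1 - κ₂ ≤ C * (1 - κ₁)) :
    Hf κ₁ x₁ - 1 ≤ 4 * C ^ 4 * (Hf κ₂ x₂ - 1) := by
  obtain ⟨u₁, hu₁, hu₁x, hH₁⟩ := exists_Hf_eq hκ₁0 hκ₁1 hx₁
  obtain ⟨u₂, hu₂, hu₂x, hH₂⟩ := exists_Hf_eq hκ₂0 hκ₂1 hx₂
  have hu : u₁ ≤ 2 * C ^ 2 * u₂ := by
    rw [← (halfG_strictMono hκ₁1).le_iff_le]
    have := mul_halfG_le_halfG_mul hC hκ₁0 hκ₁1.le hκ₂1.le hκ hu₂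
    rw [← hu₁x, ← hu₂x] at hx
    linarith
  rw [hH₁, hH₂]
  nlinarith [mul_le_mul hu hu hu₁ (by positivity)]

lemma le_mul_and_le_mul_of_div_mem_Icc {a b C : ℝ} (hb : 0 < b) (hC : 0 < C)
    (h : a / b ∈ Icc (1 / C) C) : a ≤ C * b ∧ b ≤ C * a := by
  rw [mem_Icc, div_le_div_iff₀ hC hb, div_le_iff₀ hb] at h
  constructor <;> linarith

/-- comparability of `H_{κ₁}(x₁) - 1` and `H_{κ₂}(x₂) - 1` for comparable data. -/
theorem statement5 (C₀ : ℝ) (hC₀ : 1 ≤ C₀) :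
    ∃ C₁ : ℝ, 1 ≤ C₁ ∧ ∀ x₁ x₂ κ₁ κ₂ : ℝ, 0 < x₁ → 0 < x₂ →
      κ₁ ∈ Set.Ioo (0 : ℝ) 1 → κ₂ ∈ Set.Ioo (0 : ℝ) 1 →
      x₁ / x₂ ∈ Set.Icc (1 / C₀) C₀ → κ₁ / κ₂ ∈ Set.Icc (1 / C₀) C₀ →
      (1 - κ₁) / (1 - κ₂) ∈ Set.Icc (1 / C₀) C₀ →
      1 / C₁ ≤ (Hf κ₁ x₁ - 1) / (Hf κ₂ x₂ - 1) ∧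
        (Hf κ₁ x₁ - 1) / (Hf κ₂ x₂ - 1) ≤ C₁ := by
  have hC₀4 : 1 ≤ C₀ ^ 4 := one_le_pow₀ hC₀
  refine ⟨4 * C₀ ^ 4, by linarith, ?_⟩
  intro x₁ x₂ κ₁ κ₂ hx₁ hx₂ ⟨hκ₁0, hκ₁1⟩ ⟨hκ₂0, hκ₂1⟩ hx _ hκ
  obtain ⟨hx₁₂, hx₂₁⟩ := le_mul_and_le_mul_of_div_mem_Icc hx₂ (by linarith) hx
  obtain ⟨hκ₁₂, hκ₂₁⟩ := le_mul_and_le_mul_of_div_mem_Icc (by linarith) (by linarith) hκ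
  have h₁₂ := Hf_sub_one_le hC₀ hκ₁0.le hκ₁1 hκ₂0.le hκ₂1 hx₁.le hx₂.le hx₁₂ hκ₂₁
  have h₂₁ := Hf_sub_one_le hC₀ hκ₂0.le hκ₂1 hκ₁0.le hκ₁1 hx₂.le hx₁.le hx₂₁ hκ₁₂
  have hpos : 0 < Hf κ₂ x₂ - 1 := sub_pos.2 (one_lt_Hf hκ₂0.le hκ₂1 hx₂)
  rw [div_le_div_iff₀ (by linarith) hpos, div_le_iff₀ hpos]
  constructor <;> linarith
end
end

section
/- For all θ∈ℝ, a>0, ℓ>0, writing R = R(θ,a,ℓ), p = p(a,ℓ), κ = κ(a,ℓ): (i) R ≥ r₀(a,ℓ) = p(1−κ); (ii) R/p + κ ≈ ⟨R/p⟩; (iii) |R/p + κ − |θ|/p| ≲ ln⟨R/p⟩; (iv) |θ| ≲ R ≲ p + |θ|. -/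
noncomputable section

open Real MeasureTheory Set Filter

/-! Write `y = H_κ(|θ|/p)`, so that `R/p = y - κ` and `|θ|/p = G_κ(y)`. Everything follows from
`G_κ` being within a logarithm of the identity: with `u = y + √(y²-1)` one has
`y - G_κ(y) = u⁻¹ + κ log u`, which is at least `κ` (as `u⁻¹ + log u ≥ 1`) and at most
`1 + log (2y)`. -/

section Gf

variable {κ y : ℝ}

lemma sqrt_sq_sub_one_le (hy : 1 ≤ y) : √(y ^ 2 - 1) ≤ y :=
  Real.sqrt_le_iff.mpr ⟨by linarith, by linarith⟩

lemma sub_sqrt_sq_sub_one_eq_inv (hy : 1 ≤ y) :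
    y - √(y ^ 2 - 1) = (y + √(y ^ 2 - 1))⁻¹ := by
  have hs := Real.sq_sqrt (show 0 ≤ y ^ 2 - 1 by nlinarith)
  have hu : 0 < y + √(y ^ 2 - 1) := by positivity
  field_simp
  linear_combination -hs

lemma one_le_add_sqrt_sq_sub_one (hy : 1 ≤ y) : 1 ≤ y + √(y ^ 2 - 1) := by
  linarith [Real.sqrt_nonneg (y ^ 2 - 1)]

lemma sub_Gf_eq (hy : 1 ≤ y) :
    y - Gf κ y = (y + √(y ^ 2 - 1))⁻¹ + κ * Real.log (y + √(y ^ 2 - 1)) := by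
  rw [← sub_sqrt_sq_sub_one_eq_inv hy, Gf]
  ring

lemma Gf_le_sub (hκ0 : 0 ≤ κ) (hκ1 : κ ≤ 1) (hy : 1 ≤ y) : Gf κ y ≤ y - κ := by
  have hu := one_le_add_sqrt_sq_sub_one hy
  have hlog := Real.one_sub_inv_le_log_of_pos (by linarith : 0 < y + √(y ^ 2 - 1))
  have hinv : κ * (y + √(y ^ 2 - 1))⁻¹ ≤ (y + √(y ^ 2 - 1))⁻¹ :=
    mul_le_of_le_one_left (by positivity) hκ1
  nlinarith [sub_Gf_eq (κ := κ) hy]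

lemma sub_Gf_le (hκ1 : κ ≤ 1) (hy : 1 ≤ y) :
    y - Gf κ y ≤ 1 + Real.log (2 * y) := by
  have hu := one_le_add_sqrt_sq_sub_one hy
  have hinv : (y + √(y ^ 2 - 1))⁻¹ ≤ 1 := inv_le_one_of_one_le₀ hu
  have hlog0 := Real.log_nonneg hu
  have hlog : Real.log (y + √(y ^ 2 - 1)) ≤ Real.log (2 * y) :=
    Real.log_le_log (by linarith) (by linarith [sqrt_sq_sub_one_le hy])
  have hκlog : κ * Real.log (y + √(y ^ 2 - 1)) ≤ Real.log (y + √(y ^ 2 - 1)) :=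
    mul_le_of_le_one_left hlog0 hκ1
  linarith [sub_Gf_eq (κ := κ) hy]

lemma log_two_mul_le (hy : 0 < y) : Real.log (2 * y) ≤ y / 2 + 1 := by
  have hsplit : Real.log (2 * y) = Real.log (y / 2) + 2 * Real.log 2 := by
    rw [show 2 * y = y / 2 * 2 ^ 2 by ring, Real.log_mul (by positivity) (by positivity),
      Real.log_pow]
    push_cast
    ring
  linarith [Real.log_le_sub_one_of_pos (by positivity : 0 < y / 2), Real.log_two_lt_d9]

lemma le_two_mul_Gf_add_four (hκ1 : κ ≤ 1) (hy : 1 ≤ y) :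
    y ≤ 2 * Gf κ y + 4 := by
  linarith [sub_Gf_le hκ1 hy, log_two_mul_le (by linarith : 0 < y)]

lemma Gf_one : Gf κ 1 = 0 := by
  simp [Gf]

lemma continuousOn_Gf : ContinuousOn (Gf κ) (Ici 1) := by
  have hu : ∀ y ∈ Ici (1 : ℝ), y + √(y ^ 2 - 1) ≠ 0 := fun y hy =>
    (zero_lt_one.trans_le (one_le_add_sqrt_sq_sub_one hy)).ne'
  unfold Gf
  fun_prop (disch := assumption)

lemma exists_Gf_eq (hκ1 : κ ≤ 1) {x : ℝ} (hx : 0 ≤ x) :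
    ∃ y ∈ Ici (1 : ℝ), Gf κ y = x := by
  have hY : (1 : ℝ) ≤ 2 * x + 4 := by linarith
  have hGY : x ≤ Gf κ (2 * x + 4) := by linarith [le_two_mul_Gf_add_four hκ1 hY]
  obtain ⟨y, hy, hGy⟩ := intermediate_value_Icc hY (continuousOn_Gf.mono Icc_subset_Ici_self)
    (show x ∈ Icc (Gf κ 1) (Gf κ (2 * x + 4)) from ⟨Gf_one.symm ▸ hx, hGY⟩)
  exact ⟨y, hy.1, hGy⟩

lemma one_le_Hf_and_Gf_Hf (hκ1 : κ ≤ 1) {x : ℝ} (hx : 0 ≤ x) :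
    1 ≤ Hf κ x ∧ Gf κ (Hf κ x) = x :=
  have h := exists_Gf_eq hκ1 hx
  ⟨Function.invFunOn_mem h, Function.invFunOn_eq h⟩

end Gf

section JapaneseBracket

variable {x κ y : ℝ}

lemma le_jb (x : ℝ) : x ≤ jb x :=
  (le_abs_self x).trans (Real.abs_le_sqrt (by linarith))

lemma sqrt_two_le_jb (x : ℝ) : √2 ≤ jb x :=
  Real.sqrt_le_sqrt (by nlinarith)

lemma one_le_jb (x : ℝ) : 1 ≤ jb x :=
  Real.one_lt_sqrt_two.le.trans (sqrt_two_le_jb x)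

lemma log_two_div_two_le_log_jb (x : ℝ) : Real.log 2 / 2 ≤ Real.log (jb x) := by
  rw [← Real.log_sqrt zero_le_two]
  exact Real.log_le_log (by positivity) (sqrt_two_le_jb x)

lemma le_two_mul_jb_sub (hκ1 : κ ≤ 1) : y ≤ 2 * jb (y - κ) := by
  linarith [le_jb (y - κ), one_le_jb (y - κ)]

lemma jb_sub_le_two_mul (hκ0 : 0 ≤ κ) (hκ1 : κ ≤ 1) (hy : 1 ≤ y) : jb (y - κ) ≤ 2 * y :=
  Real.sqrt_le_iff.mpr ⟨by linarith, by nlinarith⟩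

lemma sub_Gf_le_log_jb (hκ1 : κ ≤ 1) (hy : 1 ≤ y) :
    y - Gf κ y ≤ 10 * Real.log (jb (y - κ)) := by
  have hjb := log_two_div_two_le_log_jb (y - κ)
  have hlog : Real.log (2 * y) ≤ Real.log (2 ^ 2) + Real.log (jb (y - κ)) := by
    rw [← Real.log_mul (by norm_num) (by linarith [one_le_jb (y - κ)])]
    exact Real.log_le_log (by linarith) (by linarith [le_two_mul_jb_sub (y := y) hκ1])
  rw [Real.log_pow] at hlog
  push_cast at hlog
  linarith [sub_Gf_le hκ1 hy, Real.log_two_gt_d9]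

end JapaneseBracket

section Parameters

variable {m a ℓ : ℝ}

lemma one_le_one_add_div_sq (hℓ : 0 ≤ ℓ) : 1 ≤ 1 + 4 * a ^ 2 * ℓ / m ^ 2 := by
  have : 0 ≤ 4 * a ^ 2 * ℓ / m ^ 2 := by positivity
  linarith

lemma kpa_le_one (hℓ : 0 ≤ ℓ) : kpa m a ℓ ≤ 1 := by
  unfold kpa
  rw [div_le_one (Real.sqrt_pos.mpr (by linarith [one_le_one_add_div_sq (m := m) (a := a) hℓ]))]
  exact Real.one_le_sqrt.mpr (one_le_one_add_div_sq hℓ)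

end Parameters

/-- basic estimates for the radial function `R(θ,a,ℓ)` (constants depending
only on `m`). -/
theorem statement7 (m : ℝ) (hm : 0 < m) :
    ∃ C : ℝ, 0 < C ∧ ∀ θ a ℓ : ℝ, 0 < a → 0 < ℓ →
      (rZero m a ℓ ≤ Rf m θ a ℓ ∧ rZero m a ℓ = pfn m a ℓ * (1 - kpa m a ℓ)) ∧
      (jb (Rf m θ a ℓ / pfn m a ℓ) ≤ C * (Rf m θ a ℓ / pfn m a ℓ + kpa m a ℓ) ∧
        Rf m θ a ℓ / pfn m a ℓ + kpa m a ℓ ≤ C * jb (Rf m θ a ℓ / pfn m a ℓ)) ∧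
      |Rf m θ a ℓ / pfn m a ℓ + kpa m a ℓ - |θ| / pfn m a ℓ| ≤
        C * Real.log (jb (Rf m θ a ℓ / pfn m a ℓ)) ∧
      (|θ| ≤ C * Rf m θ a ℓ ∧ Rf m θ a ℓ ≤ C * (pfn m a ℓ + |θ|)) := by
  refine ⟨10, by norm_num, fun θ a ℓ ha hℓ => ?_⟩
  set κ := kpa m a ℓ
  set p := pfn m a ℓ
  have hκ0 : 0 ≤ κ := (kpa_pos hℓ.le).le
  have hκ1 : κ ≤ 1 := kpa_le_one hℓ.le
  have hp : 0 < p := pfn_pos hm ha.ne' hℓ.le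
  obtain ⟨hy, hGy⟩ := one_le_Hf_and_Gf_Hf hκ1 (by positivity : 0 ≤ |θ| / p)
  have hR : Rf m θ a ℓ = p * (Hf κ (|θ| / p) - κ) := (mul_sub _ _ _).symm
  generalize Hf κ (|θ| / p) = y at hy hGy hR
  have hRp : Rf m θ a ℓ / p = y - κ := by rw [hR]; field_simp
  have hθ : |θ| = p * Gf κ y := by rw [hGy]; field_simp
  have hG0 : 0 ≤ Gf κ y := hGy ▸ by positivity
  have hG := Gf_le_sub hκ0 hκ1 hy
  have hG' := le_two_mul_Gf_add_four hκ1 hy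
  rw [hRp, sub_add_cancel, ← hGy, abs_of_nonneg (by linarith), hR, hθ]
  refine ⟨⟨?_, rfl⟩, ⟨?_, ?_⟩, ?_, ?_, ?_⟩
  · exact mul_le_mul_of_nonneg_left (by linarith) hp.le
  · linarith [jb_sub_le_two_mul hκ0 hκ1 hy]
  · linarith [le_two_mul_jb_sub (y := y) hκ1, one_le_jb (y - κ)]
  · exact sub_Gf_le_log_jb hκ1 hy
  · nlinarith
  · nlinarith [mul_le_mul_of_nonneg_left hG' hp.le, mul_nonneg hp.le hG0]
end
end
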